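/- arXiv:1512.00819 — 3 statements merged into one kernel-verified Lean document; each statement's English description precedes it below -/
import Mathlib

section
/- Let {Z_j}_{j=1}^b be centered square-integrable random variables with covariance Cov(Z_i, Z_j) = γ(|i−j|), where γ : ℕ → ℝ is positive, non-increasing, and satisfies γ(n) ≥ c₂ n^{2d−1} for all n ≥ 1 for some constants c₂ > 0 and d ∈ (0, 1/2). Then for any constant c > 0 and any nonnegative reals u_1,…,u_b with Var(∑_{j=1}^b u_j Z_j) ≤ c, there exists a constant c₁ > 0, depending only on c, c₂, and d (not on b), such that ∑_{j=1}^b u_j ≤ c₁ b^{1/2−d}. -/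
/-- if γ is positive, non-increasing and bounded below by c₂ n^{2d-1},
then for nonnegative weights u with quadratic form (variance) ∑ u_i u_j γ(|i-j|) ≤ c,
the sum of the weights is at most c₁ b^{1/2-d}, with c₁ depending only on c, c₂, d. -/
theorem stmt2 (γ : ℕ → ℝ) (d c₂ : ℝ) (hd : 0 < d) (hd2 : d < 1/2) (hc₂ : 0 < c₂)
    (hpos : ∀ n, 0 < γ n) (hanti : Antitone γ)
    (hlow : ∀ n : ℕ, 1 ≤ n → c₂ * (n : ℝ) ^ (2*d - 1) ≤ γ n)
    (c : ℝ) (hc : 0 < c) :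
    ∃ c₁ : ℝ, 0 < c₁ ∧ ∀ (b : ℕ) (u : Fin b → ℝ), (∀ j, 0 ≤ u j) →
      (∑ i, ∑ j, u i * u j * γ (((i : ℕ) : ℤ) - ((j : ℕ) : ℤ)).natAbs) ≤ c →
      (∑ j, u j) ≤ c₁ * (b : ℝ) ^ ((1:ℝ)/2 - d) := by
  refine ⟨Real.sqrt (c / c₂), Real.sqrt_pos.2 (div_pos hc hc₂), ?_⟩
  intro b u hu hvar
  rcases Nat.eq_zero_or_pos b with hb | hb
  · subst hb
    simp
    positivity
  have hbR : (0:ℝ) < (b:ℝ) := by exact_mod_cast hb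
  set S := ∑ j, u j with hS
  have hS0 : 0 ≤ S := Finset.sum_nonneg fun j _ => hu j
  -- γ b * S^2 ≤ variance
  have key : γ b * S ^ 2 ≤ ∑ i, ∑ j, u i * u j * γ (((i : ℕ) : ℤ) - ((j : ℕ) : ℤ)).natAbs := by
    have heq : γ b * S ^ 2 = ∑ i, ∑ j, u i * u j * γ b := by
      rw [sq, Finset.sum_mul_sum, Finset.mul_sum]
      refine Finset.sum_congr rfl fun i _ => ?_
      rw [Finset.mul_sum]
      refine Finset.sum_congr rfl fun j _ => by ring
    rw [heq]
    refine Finset.sum_le_sum fun i _ => Finset.sum_le_sum fun j _ => ?_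
    have hle : (((i : ℕ) : ℤ) - ((j : ℕ) : ℤ)).natAbs ≤ b := by
      have := i.isLt; have := j.isLt; omega
    exact mul_le_mul_of_nonneg_left (hanti hle) (mul_nonneg (hu i) (hu j))
  have hγb : c₂ * (b : ℝ) ^ (2*d - 1) ≤ γ b := hlow b hb
  have h1 : c₂ * (b : ℝ) ^ (2*d - 1) * S ^ 2 ≤ c :=
    calc c₂ * (b : ℝ) ^ (2*d - 1) * S ^ 2 ≤ γ b * S ^ 2 :=
          mul_le_mul_of_nonneg_right hγb (sq_nonneg S)
      _ ≤ _ := key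
      _ ≤ c := hvar
  have h2 : S ^ 2 ≤ (c / c₂) * (b : ℝ) ^ (1 - 2*d) := by
    have hpow : (0:ℝ) < (b : ℝ) ^ (2*d - 1) := Real.rpow_pos_of_pos hbR _
    have hmul : (b : ℝ) ^ (2*d - 1) * (b : ℝ) ^ (1 - 2*d) = 1 := by
      rw [← Real.rpow_add hbR]
      norm_num
    have hq : (b:ℝ) ^ (1 - 2*d) = ((b:ℝ) ^ (2*d - 1))⁻¹ := by
      rw [← Real.rpow_neg hbR.le]; ring_nf
    rw [hq, ← div_eq_mul_inv, le_div_iff₀ hpow, le_div_iff₀ hc₂]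
    nlinarith [h1]
  have hrhs : (Real.sqrt (c / c₂) * (b : ℝ) ^ ((1:ℝ)/2 - d)) ^ 2
      = (c / c₂) * (b : ℝ) ^ (1 - 2*d) := by
    rw [mul_pow, Real.sq_sqrt (le_of_lt (div_pos hc hc₂)),
      ← Real.rpow_natCast ((b:ℝ) ^ ((1:ℝ)/2 - d)) 2, ← Real.rpow_mul hbR.le]
    rw [show ((1:ℝ)/2 - d) * ((2:ℕ):ℝ) = 1 - 2*d by push_cast; ring]
  have hrhs0 : 0 ≤ Real.sqrt (c / c₂) * (b : ℝ) ^ ((1:ℝ)/2 - d) :=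
    mul_nonneg (Real.sqrt_nonneg _) (Real.rpow_pos_of_pos hbR _).le
  calc S = Real.sqrt (S ^ 2) := (Real.sqrt_sq hS0).symm
    _ ≤ Real.sqrt ((Real.sqrt (c / c₂) * (b : ℝ) ^ ((1:ℝ)/2 - d)) ^ 2) :=
        Real.sqrt_le_sqrt (by rw [hrhs]; exact h2)
    _ = _ := Real.sqrt_sq hrhs0
end

section
/- Let {Z_n} be a stationary Gaussian process whose covariance function γ_d is that of a FARIMA(0,d,0) process with d ∈ (0,1/2), i.e. γ_d(n) = γ_d(0) ∏_{k=1}^n (k−1+d)/(k−d) with γ_d(0) = Γ(1−2d)/Γ(1−d)². Then there exists a constant c₂ > 0 (depending only on d) such that for all 1 ≤ b < k, the canonical correlation ρ_{k,b} between (Z_1,…,Z_b) and (Z_{k+1},…,Z_{k+b}) satisfies ρ_{k,b} ≥ c₂ (b/(k+b−1))^{1−2d}. -/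
/-- The FARIMA(0,d,0) autocovariance function:
γ_d(n) = γ_d(0) ∏_{k=1}^n (k-1+d)/(k-d), γ_d(0) = Γ(1-2d)/Γ(1-d)². -/
noncomputable def gammaFARIMA (d : ℝ) (n : ℕ) : ℝ :=
  (Real.Gamma (1 - 2*d) / (Real.Gamma (1 - d))^2) *
    ∏ k ∈ Finset.Icc 1 n, (((k : ℝ) - 1 + d) / ((k : ℝ) - d))

/-- Canonical correlation between the blocks (Z_1,…,Z_b) and (Z_{k+1},…,Z_{k+b})
of a stationary process with autocovariance γ, expressed through the covariance
structure: sup over u, v of the correlation of ⟨u,Z_1^b⟩ and ⟨v,Z_{k+1}^{k+b}⟩. -/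
noncomputable def canCorr (γ : ℕ → ℝ) (k b : ℕ) : ℝ :=
  sSup {r : ℝ | ∃ u v : Fin b → ℝ,
    r = (∑ i : Fin b, ∑ j : Fin b, u i * v j * γ (k + (j : ℕ) - (i : ℕ))) /
      (Real.sqrt (∑ i : Fin b, ∑ j : Fin b, u i * u j *
          γ (((i : ℕ) : ℤ) - ((j : ℕ) : ℤ)).natAbs) *
       Real.sqrt (∑ i : Fin b, ∑ j : Fin b, v i * v j *
          γ (((i : ℕ) : ℤ) - ((j : ℕ) : ℤ)).natAbs))}

/-!
By Pólya's criterion the autocovariance `γ_d` is positive semidefinite: it is positive,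
decreasing and convex, hence a nonnegative combination of a constant and tents `n ↦ (j - n)⁺`,
each the autocovariance of a moving sum of white noise. So every ratio in `canCorr` is at most `1`
by Cauchy–Schwarz, and `canCorr` dominates the ratio for `u = v = (1, …, 1)`. The ratios
`γ_d(n + 1) / γ_d(n) = (n + d) / (n + 1 - d)` are squeezed by Bernoulli's inequality between
powers of consecutive quotients, giving `γ_d(n) ≍ n^(2d-1)`. Hence the numerator of that ratio is
at least `b² γ_d(k + b - 1) ≳ b² (k + b - 1)^(2d-1)` and its denominator
`Var(Z_1 + ⋯ + Z_b) ≤ 2b ∑_{m<b} γ_d(m)` is `≲ b^(1+2d)`.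
-/

open Finset Real

theorem div_add_le_rpow_div_add_one {x t : ℝ} (hx : 0 < x) (ht0 : 0 ≤ t) (ht1 : t ≤ 1) :
    x / (x + t) ≤ (x / (x + 1)) ^ t := by
  have h := rpow_one_add_le_one_add_mul_self (s := 1 / x)
    (by have := one_div_pos.2 hx; linarith) ht0 ht1
  have e1 : 1 + 1 / x = (x / (x + 1))⁻¹ := by field_simp
  have e2 : 1 + t * (1 / x) = (x / (x + t))⁻¹ := by field_simp
  rw [e1, e2, inv_rpow (by positivity)] at h
  exact (inv_le_inv₀ (by positivity) (by positivity)).1 h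

theorem rpow_div_add_one_le {x t : ℝ} (hx : 0 ≤ x) (ht0 : 0 ≤ t) (ht1 : t ≤ 1) :
    (x / (x + 1)) ^ t ≤ (x + 1 - t) / (x + 1) := by
  have hx1 : 0 < x + 1 := by linarith
  have h := rpow_one_add_le_one_add_mul_self (s := -(1 / (x + 1)))
    (by rw [neg_le_neg_iff, div_le_one hx1]; linarith) ht0 ht1
  convert h using 2 <;> field_simp <;> ring

theorem sum_range_add_one_rpow_le {s : ℝ} (hs0 : 0 < s) (hs1 : s ≤ 1) (M : ℕ) :
    ∑ m ∈ range M, ((m : ℝ) + 1) ^ (s - 1) ≤ (M : ℝ) ^ s / s := by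
  induction M with
  | zero => simp [zero_rpow hs0.ne']
  | succ M ih =>
    have hM : (0 : ℝ) < M + 1 := by positivity
    -- concavity of `x ↦ x ^ s` on `[M, M + 1]`
    have hconc : (M : ℝ) ^ s + s * ((M : ℝ) + 1) ^ (s - 1) ≤ ((M : ℝ) + 1) ^ s := by
      have h := mul_le_mul_of_nonneg_right (rpow_div_add_one_le (Nat.cast_nonneg M) hs0.le hs1)
        (rpow_nonneg hM.le s)
      rw [div_rpow (Nat.cast_nonneg M) hM.le, div_mul_cancel₀ _ (by positivity)] at h
      have e : ((M : ℝ) + 1 - s) / (M + 1) * (M + 1) ^ s = (M + 1) ^ s - s * (M + 1) ^ (s - 1) := by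
        rw [rpow_sub_one hM.ne']
        field_simp
      linarith
    rw [sum_range_succ, Nat.cast_succ, le_div_iff₀ hs0, add_mul]
    rw [le_div_iff₀ hs0] at ih
    linarith

/-- `covForm g t x y` is the covariance of `∑ α, x α • Z (t α)` and `∑ β, y β • Z (t β)` for a
stationary sequence `(Z n)_{n ∈ ℤ}` with autocovariance function `g`. -/
noncomputable def covForm (g : ℕ → ℝ) {ι : Type*} [Fintype ι] (t : ι → ℤ) (x y : ι → ℝ) : ℝ :=
  ∑ α, ∑ β, x α * y β * g (t α - t β).natAbs

def IsPosSemidefSeq (g : ℕ → ℝ) : Prop :=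
  ∀ (ι : Type) [Fintype ι] (t : ι → ℤ) (x : ι → ℝ), 0 ≤ covForm g t x x

section covForm

variable {g : ℕ → ℝ} {ι : Type*} [Fintype ι] (t : ι → ℤ)

theorem covForm_comm (x y : ι → ℝ) : covForm g t x y = covForm g t y x := by
  rw [covForm, covForm, sum_comm]
  refine sum_congr rfl fun α _ => sum_congr rfl fun β _ => ?_
  rw [← Int.natAbs_neg, neg_sub]
  ring

theorem covForm_add_smul_self (x y : ι → ℝ) (s : ℝ) :
    covForm g t (x + s • y) (x + s • y) =
      covForm g t x x + s * covForm g t x y + s * covForm g t y x + s ^ 2 * covForm g t y y := by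
  simp only [covForm, mul_sum, ← sum_add_distrib]
  refine sum_congr rfl fun α _ => sum_congr rfl fun β _ => ?_
  simp only [Pi.add_apply, Pi.smul_apply, smul_eq_mul]
  ring

end covForm

namespace IsPosSemidefSeq

variable {f g : ℕ → ℝ}

theorem covForm_sq_le (hg : IsPosSemidefSeq g) {ι : Type} [Fintype ι] (t : ι → ℤ)
    (x y : ι → ℝ) : covForm g t x y ^ 2 ≤ covForm g t x x * covForm g t y y := by
  have h := discrim_le_zero (a := covForm g t y y) (b := 2 * covForm g t x y)
      (c := covForm g t x x) fun s => by
    have := hg ι t (x + s • y)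
    rw [covForm_add_smul_self, covForm_comm t y x] at this
    linarith
  rw [discrim] at h
  linarith

theorem add (hf : IsPosSemidefSeq f) (hg : IsPosSemidefSeq g) : IsPosSemidefSeq (f + g) := by
  intro ι _ t x
  have : covForm (f + g) t x x = covForm f t x x + covForm g t x x := by
    simp only [covForm, Pi.add_apply, mul_add, sum_add_distrib]
  rw [this]
  exact add_nonneg (hf ι t x) (hg ι t x)

theorem const_mul (hg : IsPosSemidefSeq g) {c : ℝ} (hc : 0 ≤ c) :
    IsPosSemidefSeq fun n => c * g n := by
  intro ι _ t x
  have : covForm (fun n => c * g n) t x x = c * covForm g t x x := by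
    simp only [covForm, mul_sum]
    exact sum_congr rfl fun α _ => sum_congr rfl fun β _ => by ring
  rw [this]
  exact mul_nonneg hc (hg ι t x)

end IsPosSemidefSeq

theorem isPosSemidefSeq_const {a : ℝ} (ha : 0 ≤ a) : IsPosSemidefSeq fun _ => a := by
  intro ι _ t x
  have : covForm (fun _ => a) t x x = a * (∑ α, x α) ^ 2 := by
    rw [covForm, sq, sum_mul_sum, mul_sum]
    refine sum_congr rfl fun α _ => ?_
    rw [mul_sum]
    exact sum_congr rfl fun β _ => by ring
  rw [this]
  positivity

theorem isPosSemidefSeq_sum {κ : Type*} {s : Finset κ} {f : κ → ℕ → ℝ}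
    (hf : ∀ j ∈ s, IsPosSemidefSeq (f j)) : IsPosSemidefSeq (∑ j ∈ s, f j) :=
  sum_induction f _ (fun _ _ => IsPosSemidefSeq.add) (fun _ _ _ _ => by simp [covForm]) hf

theorem card_Ico_inter_Ico_add (a c : ℤ) (j : ℕ) :
    #(Ico a (a + j) ∩ Ico c (c + j)) = j - (a - c).natAbs := by
  rw [Ico_inter_Ico, Int.card_Ico]
  omega

/-- The tent `n ↦ (j - n)⁺` is the autocovariance of a moving sum of `j` white noises. -/
theorem isPosSemidefSeq_tent (j : ℕ) : IsPosSemidefSeq fun n => ((j - n : ℕ) : ℝ) := by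
  intro ι _ t x
  classical
  set I : ι → Finset ℤ := fun α => Ico (t α) (t α + j)
  set S := univ.biUnion I
  set e : ι → ℤ → ℝ := fun α s => if s ∈ I α then 1 else 0
  have hcard : ∀ α β, ((j - (t α - t β).natAbs : ℕ) : ℝ) = ∑ s ∈ S, e α s * e β s := by
    intro α β
    simp only [e, ite_zero_mul_ite_zero, one_mul, ← mem_inter, sum_ite_mem, sum_const,
      nsmul_one]
    rw [inter_eq_right.2 (inter_subset_left.trans (subset_biUnion_of_mem I (mem_univ α))),
      card_Ico_inter_Ico_add]
  have : covForm (fun n => ((j - n : ℕ) : ℝ)) t x x = ∑ s ∈ S, (∑ α, x α * e α s) ^ 2 := by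
    rw [covForm]
    symm
    simp_rw [sq, sum_mul_sum]
    rw [sum_comm]
    refine sum_congr rfl fun α _ => ?_
    rw [sum_comm]
    refine sum_congr rfl fun β _ => ?_
    rw [hcard, mul_sum]
    exact sum_congr rfl fun s _ => by ring
  rw [this]
  positivity

theorem eq_add_sum_tent {h : ℕ → ℝ} {L : ℕ} (hL : ∀ n, L ≤ n → h n = h L) (n : ℕ) :
    h n = h L + ∑ j ∈ range L, (h j - 2 * h (j + 1) + h (j + 2)) * ((j + 1 - n : ℕ) : ℝ) := by
  set R : ℕ → ℝ := fun n =>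
    h L + ∑ j ∈ range L, (h j - 2 * h (j + 1) + h (j + 2)) * ((j + 1 - n : ℕ) : ℝ)
  have hfar : ∀ n, L ≤ n → h n = R n := fun n hn => by
    rw [hL n hn, left_eq_add]
    refine sum_eq_zero fun j hj => ?_
    rw [Nat.sub_eq_zero_of_le (by rw [mem_range] at hj; omega), Nat.cast_zero, mul_zero]
  have htel : ∀ m,
      ∑ j ∈ range m, (h j - 2 * h (j + 1) + h (j + 2)) = h 0 - h 1 - (h m - h (m + 1)) := fun m => by
    rw [← sum_range_sub' (fun i => h i - h (i + 1))]
    exact sum_congr rfl fun j _ => by ring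
  have hstep : ∀ n, R n - R (n + 1) = h n - h (n + 1) := fun n => by
    have hjump : ∀ j,
        ((j + 1 - n : ℕ) : ℝ) - ((j + 1 - (n + 1) : ℕ) : ℝ) = if n ≤ j then 1 else 0 := fun j => by
      split_ifs with hj
      · rw [show j + 1 - n = j + 1 - (n + 1) + 1 by omega, Nat.cast_succ, add_sub_cancel_left]
      · rw [Nat.sub_eq_zero_of_le (by omega), Nat.sub_eq_zero_of_le (by omega), sub_self]
    simp only [R, add_sub_add_left_eq_sub, ← sum_sub_distrib, ← mul_sub, hjump, mul_ite, mul_one,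
      mul_zero]
    rw [← sum_filter, show (range L).filter (n ≤ ·) = Ico n L by ext; simp; omega]
    rcases le_or_gt L n with hn | hn
    · rw [Ico_eq_empty_of_le hn, sum_empty, hL n hn, hL (n + 1) (by omega), sub_self]
    · rw [sum_Ico_eq_sub _ hn.le, htel, htel, hL (L + 1) (by omega)]
      ring
  have hconst : ∀ m, h n - R n = h (n + m) - R (n + m) := fun m => by
    induction m with
    | zero => rfl
    | succ m ih => rw [ih, ← add_assoc]; linarith [hstep (n + m)]
  linarith [hconst L, hfar (n + L) (by omega)]

theorem isPosSemidefSeq_of_convex_of_eventuallyConst {h : ℕ → ℝ} {L : ℕ}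
    (hL : ∀ n, L ≤ n → h n = h L) (hL0 : 0 ≤ h L)
    (hconv : ∀ n, 2 * h (n + 1) ≤ h n + h (n + 2)) : IsPosSemidefSeq h := by
  have hdecomp : h = (fun _ => h L) + ∑ j ∈ range L,
      fun n => (h j - 2 * h (j + 1) + h (j + 2)) * ((j + 1 - n : ℕ) : ℝ) := by
    funext n
    rw [Pi.add_apply, Finset.sum_apply]
    exact eq_add_sum_tent hL n
  rw [hdecomp]
  exact (isPosSemidefSeq_const hL0).add (isPosSemidefSeq_sum fun j _ =>
    (isPosSemidefSeq_tent (j + 1)).const_mul (by linarith [hconv j]))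

/-- Pólya's criterion. -/
theorem isPosSemidefSeq_of_antitone_of_convex {g : ℕ → ℝ} (hg : ∀ n, 0 ≤ g n) (hanti : Antitone g)
    (hconv : ∀ n, 2 * g (n + 1) ≤ g n + g (n + 2)) : IsPosSemidefSeq g := by
  intro ι _ t x
  set L := univ.sup fun p : ι × ι => (t p.1 - t p.2).natAbs
  have hle : ∀ α β, (t α - t β).natAbs ≤ L := fun α β =>
    le_sup (f := fun p : ι × ι => (t p.1 - t p.2).natAbs) (mem_univ (α, β))
  -- `g` agrees with its truncation `n ↦ g (min n L)` on all lags that occur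
  have htrunc : IsPosSemidefSeq fun n => g (min n L) := by
    refine isPosSemidefSeq_of_convex_of_eventuallyConst (L := L) (fun n hn => by
      rw [min_eq_right hn, min_self]) (hg _) fun n => ?_
    rcases le_or_gt (n + 2) L with hn | hn
    · rw [min_eq_left hn, min_eq_left (by omega : n + 1 ≤ L), min_eq_left (by omega : n ≤ L)]
      exact hconv n
    · rw [min_eq_right (by omega : L ≤ n + 2), min_eq_right (by omega : L ≤ n + 1)]
      linarith [hanti (min_le_right n L)]
  have := htrunc ι t x
  simpa only [covForm, min_eq_left (hle _ _)] using this

theorem div_sqrt_mul_sqrt_le_one {a b c : ℝ} (ha : 0 ≤ a) (h : c ^ 2 ≤ a * b) :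
    c / (√a * √b) ≤ 1 := by
  rw [← sqrt_mul ha]
  rcases (sqrt_nonneg (a * b)).eq_or_lt with h0 | hpos
  · rw [← h0, div_zero]
    exact zero_le_one
  · rw [div_le_one hpos]
    exact (le_abs_self c).trans (abs_le_sqrt h)

section canCorr

variable {γ : ℕ → ℝ} {b k : ℕ}

/-- The two blocks sit at positions `0, …, b - 1` and `k, …, k + b - 1` of one stationary sequence;
`b ≤ k` makes the truncated subtraction `k + j - i` the true lag. -/
theorem sq_sum_mul_shift_le (hγ : IsPosSemidefSeq γ) (hbk : b ≤ k) (u v : Fin b → ℝ) :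
    (∑ i : Fin b, ∑ j : Fin b, u i * v j * γ (k + j - i)) ^ 2 ≤
      covForm γ (fun i : Fin b => (i : ℤ)) u u * covForm γ (fun i : Fin b => (i : ℤ)) v v := by
  let t : Fin b ⊕ Fin b → ℤ := Sum.elim (fun i => i) (fun j => k + j)
  have hcross : covForm γ t (Sum.elim u 0) (Sum.elim 0 v) =
      ∑ i : Fin b, ∑ j : Fin b, u i * v j * γ (k + j - i) := by
    simp only [covForm, Fintype.sum_sum_type, t, Sum.elim_inl, Sum.elim_inr, Pi.zero_apply,
      zero_mul, mul_zero, sum_const_zero, add_zero, zero_add]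
    refine sum_congr rfl fun i _ => sum_congr rfl fun j _ => ?_
    congr 2
    omega
  have hu : covForm γ t (Sum.elim u 0) (Sum.elim u 0) = covForm γ (fun i : Fin b => (i : ℤ)) u u :=
    by simp [covForm, Fintype.sum_sum_type, t]
  have hv : covForm γ t (Sum.elim 0 v) (Sum.elim 0 v) = covForm γ (fun i : Fin b => (i : ℤ)) v v :=
    by simp [covForm, Fintype.sum_sum_type, t]
  rw [← hcross, ← hu, ← hv]
  exact hγ.covForm_sq_le t _ _

theorem le_canCorr (hγ : IsPosSemidefSeq γ) (hbk : b ≤ k) (u v : Fin b → ℝ) :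
    (∑ i : Fin b, ∑ j : Fin b, u i * v j * γ (k + j - i)) /
        (√(covForm γ (fun i : Fin b => (i : ℤ)) u u) * √(covForm γ (fun i : Fin b => (i : ℤ)) v v))
      ≤ canCorr γ k b := by
  refine le_csSup ⟨1, ?_⟩ ⟨u, v, rfl⟩
  rintro r ⟨u, v, rfl⟩
  exact div_sqrt_mul_sqrt_le_one (hγ _ _ u) (sq_sum_mul_shift_le hγ hbk u v)

theorem mul_le_sum_sum_shift (hγ : Antitone γ) (b k : ℕ) :
    (b : ℝ) ^ 2 * γ (k + b - 1) ≤ ∑ i : Fin b, ∑ j : Fin b, γ (k + j - i) := by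
  calc (b : ℝ) ^ 2 * γ (k + b - 1) = ∑ _i : Fin b, ∑ _j : Fin b, γ (k + b - 1) := by
        simp only [sum_const, card_univ, Fintype.card_fin, nsmul_eq_mul]
        ring
    _ ≤ _ := sum_le_sum fun i _ => sum_le_sum fun j _ => hγ (by have := j.isLt; omega)

theorem sum_range_natAbs_sub_le (hγ : ∀ n, 0 ≤ γ n) {i : ℕ} (hi : i < b) :
    ∑ j ∈ range b, γ ((i : ℤ) - j).natAbs ≤ 2 * ∑ m ∈ range b, γ m := by
  have hsub : ∀ {M}, M ≤ b → ∑ m ∈ range M, γ m ≤ ∑ m ∈ range b, γ m := fun hM =>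
    sum_le_sum_of_subset_of_nonneg (range_subset_range.2 hM) fun m _ _ => hγ m
  rw [← sum_range_add_sum_Ico _ hi.le, sum_Ico_eq_sum_range, two_mul]
  gcongr ?_ + ?_
  · rw [← sum_range_reflect]
    calc ∑ j ∈ range i, γ ((i : ℤ) - (i - 1 - j : ℕ)).natAbs = ∑ j ∈ range i, γ (j + 1) :=
          sum_congr rfl fun j hj => by rw [mem_range] at hj; congr 1; omega
      _ ≤ ∑ m ∈ range (i + 1), γ m := by rw [sum_range_succ']; linarith [hγ 0]
      _ ≤ _ := hsub hi
  · calc ∑ m ∈ range (b - i), γ ((i : ℤ) - (i + m : ℕ)).natAbs = ∑ m ∈ range (b - i), γ m :=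
          sum_congr rfl fun m _ => by congr 1; omega
      _ ≤ _ := hsub (Nat.sub_le b i)

theorem covForm_one_le (hγ : ∀ n, 0 ≤ γ n) (b : ℕ) :
    covForm γ (fun i : Fin b => (i : ℤ)) 1 1 ≤ 2 * b * ∑ m ∈ range b, γ m := by
  simp only [covForm, Pi.one_apply, one_mul]
  calc ∑ i : Fin b, ∑ j : Fin b, γ ((i : ℤ) - (j : ℕ)).natAbs
      = ∑ i : Fin b, ∑ j ∈ range b, γ ((i : ℤ) - j).natAbs :=
        sum_congr rfl fun i _ => Fin.sum_univ_eq_sum_range (fun j => γ ((i : ℤ) - j).natAbs) b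
    _ ≤ ∑ _i : Fin b, 2 * ∑ m ∈ range b, γ m :=
        sum_le_sum fun i _ => sum_range_natAbs_sub_le hγ i.isLt
    _ = 2 * b * ∑ m ∈ range b, γ m := by
        simp only [sum_const, card_univ, Fintype.card_fin, nsmul_eq_mul]
        ring

end canCorr
section FARIMA

variable {d : ℝ}

theorem gammaFARIMA_succ (d : ℝ) (n : ℕ) :
    gammaFARIMA d (n + 1) = gammaFARIMA d n * ((n + d) / (n + 1 - d)) := by
  rw [gammaFARIMA, gammaFARIMA, prod_Icc_succ_top (Nat.le_add_left 1 n), mul_assoc]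
  push_cast
  ring_nf

theorem gammaFARIMA_zero_pos (hd2 : d < 1 / 2) : 0 < gammaFARIMA d 0 := by
  rw [gammaFARIMA, Icc_eq_empty_of_lt zero_lt_one, prod_empty, mul_one]
  exact div_pos (Gamma_pos_of_pos (by linarith)) (pow_pos (Gamma_pos_of_pos (by linarith)) 2)

theorem gammaFARIMA_pos (hd : 0 < d) (hd2 : d < 1 / 2) (n : ℕ) : 0 < gammaFARIMA d n := by
  induction n with
  | zero => exact gammaFARIMA_zero_pos hd2
  | succ n ih =>
    rw [gammaFARIMA_succ]
    have : (0 : ℝ) < n + 1 - d := by linarith [(n.cast_nonneg : (0 : ℝ) ≤ n)]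
    positivity

theorem gammaFARIMA_antitone (hd : 0 < d) (hd2 : d < 1 / 2) : Antitone (gammaFARIMA d) := by
  refine antitone_nat_of_succ_le fun n => ?_
  rw [gammaFARIMA_succ]
  refine mul_le_of_le_one_right (gammaFARIMA_pos hd hd2 n).le ?_
  rw [div_le_one (by linarith [(n.cast_nonneg : (0 : ℝ) ≤ n)])]
  linarith

theorem gammaFARIMA_convex (hd : 0 < d) (hd2 : d < 1 / 2) (n : ℕ) :
    2 * gammaFARIMA d (n + 1) ≤ gammaFARIMA d n + gammaFARIMA d (n + 2) := by
  have hn : (0 : ℝ) ≤ n := n.cast_nonneg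
  set r := ((n : ℝ) + d) / (n + 1 - d)
  set r' := ((n + 1 : ℕ) + d) / ((n + 1 : ℕ) + 1 - d : ℝ)
  have hr' : r ≤ r' := by
    rw [div_le_div_iff₀ (by linarith) (by push_cast; linarith)]
    push_cast
    nlinarith
  have hr0 : 0 ≤ r := div_nonneg (by linarith) (by linarith)
  rw [gammaFARIMA_succ d (n + 1), gammaFARIMA_succ]
  -- `1 - 2 r + r r' ≥ (1 - r) ^ 2` because the ratios increase
  nlinarith [gammaFARIMA_pos hd hd2 n, mul_le_mul_of_nonneg_left hr' hr0, sq_nonneg (1 - r)]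

theorem gammaFARIMA_le_rpow (hd : 0 < d) (hd2 : d < 1 / 2) (n : ℕ) :
    gammaFARIMA d n ≤ gammaFARIMA d 0 * ((n : ℝ) + 1) ^ (2 * d - 1) := by
  have h : gammaFARIMA d n ≤ gammaFARIMA d 0 * (d / (n + d)) ^ (1 - 2 * d) := by
    induction n with
    | zero => simp [div_self hd.ne']
    | succ n ih =>
      have hx : (0 : ℝ) < n + d := by positivity
      have hstep := div_add_le_rpow_div_add_one hx (t := 1 - 2 * d) (by linarith) (by linarith)
      rw [show (n : ℝ) + d + (1 - 2 * d) = n + 1 - d by ring] at hstep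
      calc gammaFARIMA d (n + 1) = gammaFARIMA d n * ((n + d) / (n + 1 - d)) := gammaFARIMA_succ d n
        _ ≤ gammaFARIMA d 0 * (d / (n + d)) ^ (1 - 2 * d) * ((n + d) / (n + d + 1)) ^ (1 - 2 * d) :=
          mul_le_mul ih hstep (div_nonneg hx.le (by linarith))
            (by have := gammaFARIMA_zero_pos hd2; positivity)
        _ = gammaFARIMA d 0 * (d / ((n + 1 : ℕ) + d)) ^ (1 - 2 * d) := by
          rw [mul_assoc, ← mul_rpow (by positivity) (by positivity)]
          congr 2
          push_cast
          field_simp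
          ring
  refine h.trans (mul_le_mul_of_nonneg_left ?_ (gammaFARIMA_zero_pos hd2).le)
  rw [show 2 * d - 1 = -(1 - 2 * d) by ring, rpow_neg (by positivity), ← inv_rpow (by positivity)]
  refine rpow_le_rpow (by positivity) ?_ (by linarith)
  rw [div_le_iff₀ (by positivity)]
  field_simp
  nlinarith [(n.cast_nonneg : (0 : ℝ) ≤ n)]

theorem gammaFARIMA_ge_rpow (hd : 0 < d) (hd2 : d < 1 / 2) {n : ℕ} (hn : 1 ≤ n) :
    gammaFARIMA d 1 * ((1 - d) / n) ^ (1 - 2 * d) ≤ gammaFARIMA d n := by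
  have h : gammaFARIMA d 1 * ((1 - d) / (n - d)) ^ (1 - 2 * d) ≤ gammaFARIMA d n := by
    induction n, hn using Nat.le_induction with
    | base => rw [Nat.cast_one, div_self (by linarith), one_rpow, mul_one]
    | succ n hn ih =>
      have hn1 : (1 : ℝ) ≤ n := by exact_mod_cast hn
      have hstep := rpow_div_add_one_le (x := n - d) (t := 1 - 2 * d) (by linarith) (by linarith)
        (by linarith)
      rw [show (n : ℝ) - d + 1 - (1 - 2 * d) = n + d by ring,
        show (n : ℝ) - d + 1 = n + 1 - d by ring] at hstep
      have hq : 0 ≤ ((n : ℝ) - d) / (n + 1 - d) := div_nonneg (by linarith) (by linarith)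
      calc gammaFARIMA d 1 * ((1 - d) / ((n + 1 : ℕ) - d)) ^ (1 - 2 * d)
          = gammaFARIMA d 1 * ((1 - d) / (n - d)) ^ (1 - 2 * d) *
              ((n - d) / (n + 1 - d)) ^ (1 - 2 * d) := by
            rw [mul_assoc, ← mul_rpow (div_nonneg (by linarith) (by linarith)) hq]
            have hne : (n : ℝ) - d ≠ 0 := by linarith
            congr 2
            push_cast
            field_simp
        _ ≤ gammaFARIMA d n * ((n + d) / (n + 1 - d)) :=
            mul_le_mul ih hstep (rpow_nonneg hq _) (gammaFARIMA_pos hd hd2 n).le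
        _ = gammaFARIMA d (n + 1) := (gammaFARIMA_succ d n).symm
  have hn1 : (1 : ℝ) ≤ n := by exact_mod_cast hn
  refine le_trans (mul_le_mul_of_nonneg_left ?_ (gammaFARIMA_pos hd hd2 1).le) h
  exact rpow_le_rpow (div_nonneg (by linarith) (by linarith))
    (div_le_div_of_nonneg_left (by linarith) (by linarith) (by linarith)) (by linarith)

theorem sum_range_gammaFARIMA_le (hd : 0 < d) (hd2 : d < 1 / 2) (M : ℕ) :
    ∑ m ∈ range M, gammaFARIMA d m ≤ gammaFARIMA d 0 * ((M : ℝ) ^ (2 * d) / (2 * d)) := by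
  calc ∑ m ∈ range M, gammaFARIMA d m
      ≤ ∑ m ∈ range M, gammaFARIMA d 0 * ((m : ℝ) + 1) ^ (2 * d - 1) :=
        sum_le_sum fun m _ => gammaFARIMA_le_rpow hd hd2 m
    _ ≤ gammaFARIMA d 0 * ((M : ℝ) ^ (2 * d) / (2 * d)) := by
        rw [← mul_sum]
        exact mul_le_mul_of_nonneg_left (sum_range_add_one_rpow_le (by linarith) (by linarith) M)
          (gammaFARIMA_zero_pos hd2).le

theorem isPosSemidefSeq_gammaFARIMA (hd : 0 < d) (hd2 : d < 1 / 2) :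
    IsPosSemidefSeq (gammaFARIMA d) :=
  isPosSemidefSeq_of_antitone_of_convex (fun n => (gammaFARIMA_pos hd hd2 n).le)
    (gammaFARIMA_antitone hd hd2) (gammaFARIMA_convex hd hd2)

theorem gammaFARIMA_sum_shift_div_covForm_ge (hd : 0 < d) (hd2 : d < 1 / 2) {b k : ℕ} (hb : 1 ≤ b)
    (hbk : b ≤ k) :
    d * gammaFARIMA d 1 * (1 - d) ^ (1 - 2 * d) / gammaFARIMA d 0 *
        ((b : ℝ) / ((k : ℝ) + b - 1)) ^ (1 - 2 * d) ≤
      (∑ i : Fin b, ∑ j : Fin b, gammaFARIMA d (k + j - i)) /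
        covForm (gammaFARIMA d) (fun i : Fin b => (i : ℤ)) 1 1 := by
  have hγ0 := gammaFARIMA_zero_pos hd2
  have hb0 : (0 : ℝ) < b := by exact_mod_cast hb
  set n : ℝ := (k : ℝ) + b - 1
  have hn1 : 1 ≤ n := by
    have : (1 : ℝ) ≤ b := by exact_mod_cast hb
    have : (b : ℝ) ≤ k := by exact_mod_cast hbk
    linarith
  have hnum : (b : ℝ) ^ 2 * (gammaFARIMA d 1 * ((1 - d) / n) ^ (1 - 2 * d)) ≤
      ∑ i : Fin b, ∑ j : Fin b, gammaFARIMA d (k + j - i) := by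
    refine le_trans ?_ (mul_le_sum_sum_shift (gammaFARIMA_antitone hd hd2) b k)
    have h := gammaFARIMA_ge_rpow hd hd2 (n := k + b - 1) (by omega)
    rw [Nat.cast_sub (by omega), Nat.cast_add, Nat.cast_one] at h
    exact mul_le_mul_of_nonneg_left h (by positivity)
  have hden : covForm (gammaFARIMA d) (fun i : Fin b => (i : ℤ)) 1 1 ≤
      gammaFARIMA d 0 * b * (b : ℝ) ^ (2 * d) / d := by
    refine (covForm_one_le (fun n => (gammaFARIMA_pos hd hd2 n).le) b).trans ?_
    refine (mul_le_mul_of_nonneg_left (sum_range_gammaFARIMA_le hd hd2 b)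
      (by positivity : (0 : ℝ) ≤ 2 * b)).trans_eq ?_
    field_simp
  have hden0 : 0 < covForm (gammaFARIMA d) (fun i : Fin b => (i : ℤ)) 1 1 := by
    have : Nonempty (Fin b) := ⟨⟨0, hb⟩⟩
    simp only [covForm, Pi.one_apply, one_mul]
    exact sum_pos (fun i _ => sum_pos (fun j _ => gammaFARIMA_pos hd hd2 _) univ_nonempty)
      univ_nonempty
  refine le_trans (le_of_eq ?_) (div_le_div₀
    (sum_nonneg fun i _ => sum_nonneg fun j _ => (gammaFARIMA_pos hd hd2 _).le) hnum hden0 hden)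
  rw [div_rpow hb0.le (by linarith), div_rpow (by linarith) (by linarith)]
  field_simp
  rw [mul_assoc, ← rpow_add hb0, sub_add_cancel, rpow_one]

end FARIMA

/-- lower bound on the canonical correlation of a stationary Gaussian
FARIMA(0,d,0): ρ_{k,b} ≥ c₂ (b/(k+b-1))^{1-2d} for 1 ≤ b < k. -/
theorem stmt4 (d : ℝ) (hd : 0 < d) (hd2 : d < 1/2) :
    ∃ c₂ : ℝ, 0 < c₂ ∧ ∀ b k : ℕ, 1 ≤ b → b < k →
      c₂ * ((b : ℝ) / ((k : ℝ) + (b : ℝ) - 1)) ^ (1 - 2*d) ≤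
        canCorr (gammaFARIMA d) k b := by
  refine ⟨d * gammaFARIMA d 1 * (1 - d) ^ (1 - 2 * d) / gammaFARIMA d 0,
    div_pos (mul_pos (mul_pos hd (gammaFARIMA_pos hd hd2 1)) (rpow_pos_of_pos (by linarith) _))
      (gammaFARIMA_zero_pos hd2), fun b k hb hbk => ?_⟩
  have hpsd := isPosSemidefSeq_gammaFARIMA hd hd2
  have hcorr := le_canCorr hpsd hbk.le (fun _ => 1) (fun _ => 1)
  rw [mul_self_sqrt (hpsd _ _ _)] at hcorr
  simp only [one_mul] at hcorr
  exact (gammaFARIMA_sum_shift_div_covForm_ge hd hd2 hb hbk.le).trans hcorr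
end

section
/- Let {X_n} be a stationary sequence, b_n a sequence with b_n = o(n), and α_{k,b} the between-block mixing coefficient: α_{k,b} = sup{|P(A∩B) − P(A)P(B)| : A ∈ σ(X_1,…,X_b), B ∈ σ(X_{k+1},…,X_{k+b})}. If ∑_{k=1}^n α_{k,b_n} = o(n) as n → ∞, then for every x ∈ ℝ and every measurable T_b : ℝ^b → ℝ, the subsampling empirical distribution F̂_n(x) = (n−b_n+1)^{−1} ∑_{k=0}^{n−b_n} 1{T_{b_n}(X_{k+1},…,X_{k+b_n}) ≤ x} satisfies Var(F̂_n(x)) → 0 as n → ∞. -/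
/-!
Write `E_k` for the event that the block `(X_k, …, X_{k+b-1})` satisfies `T_b ≤ x` and put
`N = n - b + 1`. Then `F̂` is the average of the indicators of `E_0, …, E_{N-1}`, so its variance
is `N⁻² ∑_{j,k<N} Cov(1_{E_j}, 1_{E_k})`. By stationarity
`Cov(1_{E_j}, 1_{E_{j+m}}) = Cov(1_{E_0}, 1_{E_m})`, and `E_0`, `E_m` lie in the σ-algebras of the
first block and of the block starting at `m`, so this covariance is at most `α_{m,b}`. Every row of
the covariance matrix therefore sums to at most `1 + 2 ∑_{m=1}^n α_{m,b}`, whence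
`Var F̂ ≤ (1 + 2 ∑_{m=1}^n α_{m,b}) / N`. Once `b_n ≤ n / 2` this is at most
`2 / n + 4 (∑_{m=1}^n α_{m,b_n}) / n`, which tends to `0` by hypothesis.
-/

open MeasureTheory Filter Topology ProbabilityTheory

/-- The between-block strong mixing coefficient α_{k,b} of the process X:
sup of |P(A∩B) - P(A)P(B)| over A ∈ σ(X_1,…,X_b), B ∈ σ(X_{k+1},…,X_{k+b})
(indices shifted to start at 0). -/
noncomputable def alphaMix {Ω : Type*} [MeasurableSpace Ω] (μ : Measure Ω)
    (X : ℕ → Ω → ℝ) (k b : ℕ) : ℝ :=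
  sSup {x : ℝ | ∃ A B : Set Ω,
    MeasurableSet[MeasurableSpace.comap (fun ω => fun i : Fin b => X (i : ℕ) ω)
      inferInstance] A ∧
    MeasurableSet[MeasurableSpace.comap (fun ω => fun i : Fin b => X (k + (i : ℕ)) ω)
      inferInstance] B ∧
    x = |(μ (A ∩ B)).toReal - (μ A).toReal * (μ B).toReal|}

namespace Finset

theorem sum_comp_le_sum_of_injOn {ι κ M : Type*} [AddCommMonoid M] [PartialOrder M]
    [IsOrderedAddMonoid M] [DecidableEq κ] {s : Finset ι} {t : Finset κ} {g : ι → κ}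
    (hg : Set.InjOn g s) (hst : ∀ i ∈ s, g i ∈ t) {f : κ → M} (hf : ∀ k ∈ t, 0 ≤ f k) :
    ∑ i ∈ s, f (g i) ≤ ∑ k ∈ t, f k := by
  rw [← sum_image hg]
  exact sum_le_sum_of_subset_of_nonneg (image_subset_iff.mpr hst) fun k hk _ => hf k hk

theorem sum_range_natDist_le {f : ℕ → ℝ} (hf : ∀ m, 0 ≤ f m) {N n : ℕ} (hN : N ≤ n + 1)
    {j : ℕ} (hj : j < N) : ∑ k ∈ range N, f (j.dist k) ≤ f 0 + 2 * ∑ m ∈ Icc 1 n, f m := by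
  rw [← sum_filter_add_sum_filter_not _ (· ≤ j)]
  have below : ∑ k ∈ range N with k ≤ j, f (j.dist k) ≤ ∑ m ∈ insert 0 (Icc 1 n), f m := by
    rw [sum_congr rfl fun k hk => by rw [Nat.dist_eq_sub_of_le_right (mem_filter.mp hk).2]]
    refine sum_comp_le_sum_of_injOn (fun a ha b hb hab => ?_) (fun k hk => ?_) fun m _ => hf m
    · simp only [coe_filter, mem_range, Set.mem_ofPred_eq] at ha hb
      omega
    · simp only [mem_filter, mem_range] at hk
      simp only [mem_insert, mem_Icc]
      omega
  have above : ∑ k ∈ range N with ¬k ≤ j, f (j.dist k) ≤ ∑ m ∈ Icc 1 n, f m := by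
    rw [sum_congr rfl fun k hk => by
      rw [Nat.dist_eq_sub_of_le (by simp only [mem_filter] at hk; omega)]]
    refine sum_comp_le_sum_of_injOn (fun a ha b hb hab => ?_) (fun k hk => ?_) fun m _ => hf m
    · simp only [coe_filter, mem_range, Set.mem_ofPred_eq] at ha hb
      omega
    · simp only [mem_filter, mem_range] at hk
      simp only [mem_Icc]
      omega
  rw [sum_insert (by simp)] at below
  linarith

theorem sum_range_sum_range_natDist_le {f : ℕ → ℝ} (hf : ∀ m, 0 ≤ f m) {N n : ℕ}
    (hN : N ≤ n + 1) :
    ∑ j ∈ range N, ∑ k ∈ range N, f (j.dist k) ≤ N * (f 0 + 2 * ∑ m ∈ Icc 1 n, f m) := by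
  refine (sum_le_sum fun j hj => sum_range_natDist_le hf hN (mem_range.mp hj)).trans_eq ?_
  rw [sum_const, card_range, nsmul_eq_mul]

end Finset

section

variable {Ω : Type*}

section Blocks

variable (X : ℕ → Ω → ℝ)

def window (j L : ℕ) (ω : Ω) : Fin L → ℝ := fun i => X (j + i) ω

theorem window_zero (L : ℕ) : window X 0 L = fun ω (i : Fin L) => X i ω := by
  funext ω i
  simp only [window, zero_add]

theorem window_comp_natAdd (j m L : ℕ) (ω : Ω) :
    window X j (m + L) ω ∘ Fin.natAdd m = window X (j + m) L ω := by
  funext i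
  simp only [window, Function.comp_apply, Fin.natAdd, add_assoc]

variable (T : (m : ℕ) → (Fin m → ℝ) → ℝ) (x : ℝ)

def blockEvent (j b : ℕ) : Set Ω := window X j b ⁻¹' (T b ⁻¹' Set.Iic x)

theorem blockEvent_inter_eq (j m b : ℕ) :
    blockEvent X T x j b ∩ blockEvent X T x (j + m) b =
      window X j (m + b) ⁻¹' ((· ∘ Fin.castLE (Nat.le_add_left b m)) ⁻¹' (T b ⁻¹' Set.Iic x) ∩
        (· ∘ Fin.natAdd m) ⁻¹' (T b ⁻¹' Set.Iic x)) := by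
  ext ω
  simp only [blockEvent, Set.mem_inter_iff, Set.mem_preimage, window_comp_natAdd]
  rfl

variable [MeasurableSpace Ω]

def IsStationaryProcess (μ : Measure Ω) : Prop :=
  ∀ k m : ℕ, μ.map (window X k m) = μ.map (fun ω (i : Fin m) => X i ω)

theorem measurable_window (hX : ∀ i, Measurable (X i)) (j L : ℕ) :
    Measurable (window X j L) :=
  measurable_pi_lambda _ fun _ => hX _

theorem measurableSet_blockEvent (hX : ∀ i, Measurable (X i)) (hT : ∀ m, Measurable (T m))
    (j b : ℕ) : MeasurableSet (blockEvent X T x j b) :=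
  measurable_window X hX j b (hT b measurableSet_Iic)

variable {μ : Measure Ω} {X T} (hX : ∀ i, Measurable (X i)) (hstat : IsStationaryProcess X μ)
include hX hstat

theorem IsStationaryProcess.measure_window_preimage (j L : ℕ) {C : Set (Fin L → ℝ)}
    (hC : MeasurableSet C) : μ (window X j L ⁻¹' C) = μ (window X 0 L ⁻¹' C) := by
  rw [← Measure.map_apply (measurable_window X hX j L) hC,
    ← Measure.map_apply (measurable_window X hX 0 L) hC]
  exact congrArg (· C) ((hstat j L).trans (hstat 0 L).symm)

variable (hT : ∀ m, Measurable (T m))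
include hT

theorem IsStationaryProcess.measureReal_blockEvent (j b : ℕ) :
    μ.real (blockEvent X T x j b) = μ.real (blockEvent X T x 0 b) := by
  simp only [measureReal_def, blockEvent,
    hstat.measure_window_preimage hX j b (hT b measurableSet_Iic)]

theorem IsStationaryProcess.measureReal_blockEvent_inter (j m b : ℕ) :
    μ.real (blockEvent X T x j b ∩ blockEvent X T x (j + m) b) =
      μ.real (blockEvent X T x 0 b ∩ blockEvent X T x m b) := by
  have hblock : Measurable fun v : Fin (m + b) → ℝ => v ∘ Fin.castLE (Nat.le_add_left b m) :=
    measurable_pi_lambda _ fun _ => measurable_pi_apply _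
  have hshift : Measurable fun v : Fin (m + b) → ℝ => v ∘ Fin.natAdd m :=
    measurable_pi_lambda _ fun _ => measurable_pi_apply _
  have hE := hT b (measurableSet_Iic (a := x))
  have hC := (hblock hE).inter (hshift hE)
  rw [measureReal_def, measureReal_def, blockEvent_inter_eq,
    hstat.measure_window_preimage hX j _ hC, ← blockEvent_inter_eq X T x 0 m b, zero_add]

end Blocks

variable [MeasurableSpace Ω] {μ : Measure Ω}

theorem memLp_indicator_one [IsFiniteMeasure μ] {A : Set Ω} (hA : MeasurableSet A)
    (p : ENNReal) : MemLp (A.indicator (1 : Ω → ℝ)) p μ :=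
  (memLp_const (1 : ℝ)).indicator hA

variable [IsProbabilityMeasure μ]

theorem covariance_indicator_one {A B : Set Ω} (hA : MeasurableSet A) (hB : MeasurableSet B) :
    cov[A.indicator 1, B.indicator 1; μ] = μ.real (A ∩ B) - μ.real A * μ.real B := by
  rw [covariance_eq_sub (memLp_indicator_one hA 2) (memLp_indicator_one hB 2),
    ← Set.inter_indicator_one, integral_indicator_one (hA.inter hB), integral_indicator_one hA,
    integral_indicator_one hB]

theorem variance_sum_indicator_one_div {ι : Type*} (s : Finset ι) {S : ι → Set Ω}
    (hS : ∀ k, MeasurableSet (S k)) (d : ℝ) :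
    Var[fun ω => (∑ k ∈ s, (S k).indicator 1 ω) / d; μ] =
      (∑ j ∈ s, ∑ k ∈ s, (μ.real (S j ∩ S k) - μ.real (S j) * μ.real (S k))) / d ^ 2 := by
  simp only [div_eq_inv_mul]
  rw [variance_const_mul, variance_fun_sum' fun k _ => memLp_indicator_one (hS k) 2]
  simp only [covariance_indicator_one (hS _) (hS _)]
  ring

theorem integral_sq_sub_sq_integral_sum_indicator_one_div {ι : Type*} (s : Finset ι)
    {S : ι → Set Ω} (hS : ∀ k, MeasurableSet (S k)) (d : ℝ) :
    ∫ ω, ((∑ k ∈ s, (S k).indicator 1 ω) / d) ^ 2 ∂μ -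
        (∫ ω, (∑ k ∈ s, (S k).indicator 1 ω) / d ∂μ) ^ 2 =
      (∑ j ∈ s, ∑ k ∈ s, (μ.real (S j ∩ S k) - μ.real (S j) * μ.real (S k))) / d ^ 2 := by
  have hF : MemLp (fun ω => (∑ k ∈ s, (S k).indicator 1 ω) / d) 2 μ := by
    simpa only [div_eq_mul_inv] using
      (memLp_finsetSum s fun k _ => memLp_indicator_one (hS k) 2).mul_const d⁻¹
  rw [← variance_sum_indicator_one_div s hS d, variance_eq_sub hF]
  simp only [Pi.pow_apply]

theorem abs_measureReal_inter_sub_mul_le_one (A B : Set Ω) :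
    |μ.real (A ∩ B) - μ.real A * μ.real B| ≤ 1 :=
  abs_sub_le_of_nonneg_of_le measureReal_nonneg measureReal_le_one
    (mul_nonneg measureReal_nonneg measureReal_nonneg)
    (mul_le_one₀ measureReal_le_one measureReal_nonneg measureReal_le_one)

section MixingCoefficient

variable (μ) (X : ℕ → Ω → ℝ) (k b : ℕ)

theorem bddAbove_alphaMix_set : BddAbove {x : ℝ | ∃ A B : Set Ω,
    MeasurableSet[MeasurableSpace.comap (fun ω (i : Fin b) => X i ω) inferInstance] A ∧
    MeasurableSet[MeasurableSpace.comap (fun ω (i : Fin b) => X (k + i) ω) inferInstance] B ∧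
    x = |(μ (A ∩ B)).toReal - (μ A).toReal * (μ B).toReal|} := by
  refine ⟨1, ?_⟩
  rintro _ ⟨A, B, -, -, rfl⟩
  exact abs_measureReal_inter_sub_mul_le_one A B

theorem abs_measureReal_inter_sub_mul_le_alphaMix {A B : Set Ω}
    (hA : MeasurableSet[MeasurableSpace.comap (fun ω (i : Fin b) => X i ω) inferInstance] A)
    (hB : MeasurableSet[MeasurableSpace.comap (window X k b) inferInstance] B) :
    |μ.real (A ∩ B) - μ.real A * μ.real B| ≤ alphaMix μ X k b :=
  le_csSup (bddAbove_alphaMix_set μ X k b) ⟨A, B, hA, hB, rfl⟩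

theorem alphaMix_nonneg : 0 ≤ alphaMix μ X k b :=
  (abs_nonneg _).trans <| abs_measureReal_inter_sub_mul_le_alphaMix μ X k b
    (A := ∅) (B := ∅) (MeasurableSpace.measurableSet_empty _)
    (MeasurableSpace.measurableSet_empty _)

theorem alphaMix_le_one : alphaMix μ X k b ≤ 1 :=
  csSup_le ⟨_, ∅, ∅, MeasurableSpace.measurableSet_empty _,
      MeasurableSpace.measurableSet_empty _, rfl⟩
    fun _ ⟨A, B, _, _, hx⟩ => hx ▸ abs_measureReal_inter_sub_mul_le_one A B

end MixingCoefficient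

section Subsampling

variable {X : ℕ → Ω → ℝ} {T : (m : ℕ) → (Fin m → ℝ) → ℝ} (x : ℝ)
  (hX : ∀ i, Measurable (X i)) (hstat : IsStationaryProcess X μ) (hT : ∀ m, Measurable (T m))
include hX hstat hT

theorem IsStationaryProcess.abs_cov_blockEvent_le_alphaMix (b j k : ℕ) :
    |μ.real (blockEvent X T x j b ∩ blockEvent X T x k b) -
      μ.real (blockEvent X T x j b) * μ.real (blockEvent X T x k b)| ≤
      alphaMix μ X (j.dist k) b := by
  wlog hjk : j ≤ k generalizing j k
  · rw [Nat.dist_comm, Set.inter_comm, mul_comm]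
    exact this k j (by omega)
  obtain ⟨m, rfl⟩ := Nat.exists_eq_add_of_le hjk
  have h0 : MeasurableSet[MeasurableSpace.comap (fun ω (i : Fin b) => X i ω) inferInstance]
      (blockEvent X T x 0 b) := ⟨_, hT b measurableSet_Iic, by rw [← window_zero]; rfl⟩
  have hcov := abs_measureReal_inter_sub_mul_le_alphaMix μ X m b h0
    (B := blockEvent X T x m b) ⟨_, hT b measurableSet_Iic, rfl⟩
  rw [hstat.measureReal_blockEvent x hX hT m] at hcov
  rwa [Nat.dist_eq_sub_of_le hjk, Nat.add_sub_cancel_left,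
    hstat.measureReal_blockEvent_inter x hX hT, hstat.measureReal_blockEvent x hX hT j,
    hstat.measureReal_blockEvent x hX hT (j + m)]

theorem IsStationaryProcess.abs_sum_cov_blockEvent_le {N n : ℕ} (hN : N ≤ n + 1) (b : ℕ) :
    |∑ j ∈ Finset.range N, ∑ k ∈ Finset.range N,
      (μ.real (blockEvent X T x j b ∩ blockEvent X T x k b) -
        μ.real (blockEvent X T x j b) * μ.real (blockEvent X T x k b))| ≤
      N * (1 + 2 * ∑ m ∈ Finset.Icc 1 n, alphaMix μ X m b) :=
  calc _ ≤ ∑ j ∈ Finset.range N, ∑ k ∈ Finset.range N, alphaMix μ X (j.dist k) b :=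
        (Finset.abs_sum_le_sum_abs _ _).trans <| Finset.sum_le_sum fun j _ =>
          (Finset.abs_sum_le_sum_abs _ _).trans <| Finset.sum_le_sum fun k _ =>
            hstat.abs_cov_blockEvent_le_alphaMix x hX hT b j k
    _ ≤ N * (alphaMix μ X 0 b + 2 * ∑ m ∈ Finset.Icc 1 n, alphaMix μ X m b) :=
        Finset.sum_range_sum_range_natDist_le (alphaMix_nonneg μ X · b) hN
    _ ≤ _ := by gcongr; exact alphaMix_le_one μ X 0 b

theorem IsStationaryProcess.abs_sum_cov_blockEvent_div_sq_le {n b : ℕ} (hb : b ≤ n) :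
    |(∑ j ∈ Finset.range (n - b + 1), ∑ k ∈ Finset.range (n - b + 1),
      (μ.real (blockEvent X T x j b ∩ blockEvent X T x k b) -
        μ.real (blockEvent X T x j b) * μ.real (blockEvent X T x k b))) /
        ((n : ℝ) - b + 1) ^ 2| ≤
      (1 + 2 * ∑ m ∈ Finset.Icc 1 n, alphaMix μ X m b) / ((n : ℝ) - b + 1) := by
  have hN : ((n : ℝ) - b + 1) = (n - b + 1 : ℕ) := by push_cast [Nat.cast_sub hb]; ring
  have hNpos : (0 : ℝ) < (n - b + 1 : ℕ) := by positivity
  rw [hN, abs_div, abs_of_pos (pow_pos hNpos 2)]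
  calc _ ≤ _ / _ := div_le_div_of_nonneg_right
        (hstat.abs_sum_cov_blockEvent_le x hX hT (n := n) (by omega) b) (sq_nonneg _)
    _ = _ := by field_simp

end Subsampling

end

/-- for a stationary sequence with block sizes b_n = o(n) and
∑_{k=1}^n α_{k,b_n} = o(n), the variance of the subsampling empirical
distribution tends to 0. -/
theorem stmt14 {Ω : Type*} [MeasurableSpace Ω] (μ : Measure Ω)
    [IsProbabilityMeasure μ]
    (X : ℕ → Ω → ℝ) (hX : ∀ i, Measurable (X i))
    (hstat : ∀ (k m : ℕ),
      Measure.map (fun ω => fun i : Fin m => X (k + (i : ℕ)) ω) μ =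
        Measure.map (fun ω => fun i : Fin m => X (i : ℕ) ω) μ)
    (b : ℕ → ℕ) (hb : Tendsto (fun n : ℕ => (b n : ℝ) / n) atTop (𝓝 0))
    (hα : Tendsto (fun n : ℕ =>
        (∑ k ∈ Finset.Icc 1 n, alphaMix μ X k (b n)) / n) atTop (𝓝 0))
    (x : ℝ) (T : (m : ℕ) → (Fin m → ℝ) → ℝ) (hT : ∀ m, Measurable (T m)) :
    Tendsto (fun n : ℕ =>
      (let I : ℕ → Ω → ℝ := fun k ω =>
        if T (b n) (fun i : Fin (b n) => X (k + (i : ℕ)) ω) ≤ x then 1 else 0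
       let Fhat : Ω → ℝ := fun ω =>
        (∑ k ∈ Finset.range (n - b n + 1), I k ω) / (n - b n + 1 : ℝ)
       (∫ ω, Fhat ω ^ 2 ∂μ) - (∫ ω, Fhat ω ∂μ) ^ 2)) atTop (𝓝 0) := by
  have hI : ∀ n k ω, (if T (b n) (fun i : Fin (b n) => X (k + (i : ℕ)) ω) ≤ x then (1 : ℝ) else 0)
      = (blockEvent X T x k (b n)).indicator 1 ω := fun n k ω => by
    classical
    rw [Set.indicator_apply]
    exact if_congr Iff.rfl rfl rfl
  simp only [hI, integral_sq_sub_sq_integral_sum_indicator_one_div _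
    (measurableSet_blockEvent X T x hX hT · _)]
  set S := fun n => ∑ m ∈ Finset.Icc 1 n, alphaMix μ X m (b n)
  have hbound : Tendsto (fun n : ℕ => 2 / (n : ℝ) + 4 * (S n / n)) atTop (𝓝 0) := by
    simpa using (tendsto_const_div_atTop_nhds_zero_nat 2).add (hα.const_mul 4)
  refine squeeze_zero_norm' ?_ hbound
  filter_upwards [hb.eventually (eventually_le_nhds one_half_pos), eventually_ge_atTop 1]
    with n hbn hn
  have hn' : (0 : ℝ) < n := by exact_mod_cast hn
  rw [div_le_iff₀ hn'] at hbn
  have hbn' : b n ≤ n := by exact_mod_cast (by linarith : (b n : ℝ) ≤ n)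
  have hS : 0 ≤ S n := Finset.sum_nonneg fun m _ => alphaMix_nonneg μ X m (b n)
  calc _ ≤ (1 + 2 * S n) / ((n : ℝ) - b n + 1) :=
        IsStationaryProcess.abs_sum_cov_blockEvent_div_sq_le x hX hstat hT hbn'
    _ ≤ (1 + 2 * S n) / (n / 2) :=
        div_le_div_of_nonneg_left (by positivity) (by positivity) (by linarith)
    _ = 2 / n + 4 * (S n / n) := by field_simp; ring
end
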